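/- Let P be a polynomial functor on Type u given by A : Type u and B : A → Type u. Call a large P-algebra a pair (Y, sup') with Y : Type (max u v) and sup' : ∀ a : A, (B a → Y) → Y, with homomorphisms defined as usual. If (X, sup) is an initial P-algebra with X : Type u, then the large P-algebra (ULift.{v} X, fun a g => ULift.up (sup a (ULift.down ∘ g))) is initial among large P-algebras: for every large P-algebra there is exactly one homomorphism from it. -/
import Mathlib


universe u v

/-- `k` is a homomorphism of (possibly differently sized) `P`-algebras. -/
def IsAlgHom {A : Type u} {B : A → Type u} {X Y : Type*}
    (sup : ∀ a : A, (B a → X) → X) (sup' : ∀ a : A, (B a → Y) → Y)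
    (k : X → Y) : Prop :=
  ∀ (a : A) (g : B a → X), k (sup a g) = sup' a (k ∘ g)

/-- The `P`-algebra structure on `ULift.{v} X` lifted from `(X, sup)`. -/
def liftSup {A : Type u} {B : A → Type u} {X : Type u}
    (sup : ∀ a : A, (B a → X) → X) :
    ∀ a : A, (B a → ULift.{v} X) → ULift.{v} X :=
  fun a g => ULift.up (sup a (ULift.down ∘ g))

/-- Fold a `P`-algebra structure over the W-type. -/
def wFold {A : Type u} {B : A → Type u} {Y : Type*}
    (sup' : ∀ a : A, (B a → Y) → Y) : WType B → Y
  | WType.mk a f => sup' a (fun b => wFold sup' (f b))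

theorem wFold_hom {A : Type u} {B : A → Type u} {Y : Type*}
    (sup' : ∀ a : A, (B a → Y) → Y) :
    IsAlgHom WType.mk sup' (wFold sup') := fun _ _ => rfl

theorem wHom_unique {A : Type u} {B : A → Type u} {Y : Type*}
    (sup' : ∀ a : A, (B a → Y) → Y) (k k' : WType B → Y)
    (hk : IsAlgHom WType.mk sup' k) (hk' : IsAlgHom WType.mk sup' k') :
    k = k' := by
  funext w
  induction w with
  | mk a f ih =>
    rw [hk a f, hk' a f]
    congr 1
    funext b
    exact ih b

/-- if `(X, sup)` is an initial `P`-algebra in `Type u`, then its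
universe lifting `(ULift.{v} X, liftSup sup)` is initial among large
`P`-algebras, i.e. among algebras with carrier in `Type (max u v)`. -/
theorem ulift_initial_algebra {A : Type u} {B : A → Type u}
    (X : Type u) (sup : ∀ a : A, (B a → X) → X)
    (hinit : ∀ (Y : Type u) (sup' : ∀ a : A, (B a → Y) → Y),
      ∃! k : X → Y, IsAlgHom sup sup' k) :
    ∀ (Y : Type (max u v)) (sup' : ∀ a : A, (B a → Y) → Y),
      ∃! k : ULift.{v} X → Y, IsAlgHom (liftSup.{u, v} sup) sup' k := by
  intro Y sup'
  -- `f : X → WType B` the unique algebra hom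
  obtain ⟨f, hf, -⟩ := hinit (WType B) WType.mk
  -- `g : WType B → X` by folding
  set g : WType B → X := wFold sup with hg_def
  have hg : IsAlgHom WType.mk sup g := wFold_hom sup
  -- g ∘ f = id
  have hgf : g ∘ f = id := by
    obtain ⟨e, -, he⟩ := hinit X sup
    have h1 : IsAlgHom sup sup (g ∘ f) := by
      intro a gg
      simp only [Function.comp_apply, hf a gg, hg, Function.comp_assoc]
      exact hg a (f ∘ gg)
    have h2 : IsAlgHom sup sup (id : X → X) := by
      intro a gg; rfl
    rw [he _ h1, he _ h2]
  -- f ∘ g = id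
  have hfg : f ∘ g = id := by
    apply wHom_unique WType.mk
    · intro a gg
      simp only [Function.comp_apply]
      rw [hg a gg, hf a (g ∘ gg)]
      rfl
    · intro a gg; rfl
  refine ⟨wFold sup' ∘ f ∘ ULift.down, ?_, ?_⟩
  · intro a gg
    show wFold sup' (f (sup a (ULift.down ∘ gg))) = _
    rw [hf a (ULift.down ∘ gg)]
    rfl
  · intro k hk
    have hkg : IsAlgHom WType.mk sup' (k ∘ ULift.up ∘ g) := by
      intro a gg
      simp only [Function.comp_apply]
      rw [hg a gg]
      exact hk a (ULift.up ∘ g ∘ gg)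
    have := wHom_unique sup' (k ∘ ULift.up ∘ g) (wFold sup') hkg (wFold_hom sup')
    funext x
    have : k (ULift.up (g (f x.down))) = wFold sup' (f x.down) :=
      congrFun this (f x.down)
    have hgfx : g (f x.down) = x.down := congrFun hgf x.down
    rw [hgfx] at this
    simpa using this
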